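/- arXiv:2601.03557 — 4 statements merged into one kernel-verified Lean document; each statement's English description precedes it below -/
import Mathlib

section
/- Let λ₀ > 0 and λ < 0 be real constants, let z : [0,∞) → (0,∞) be continuous, and let F : [0,∞) → ℝ satisfy F(t)/t → 0 as t → ∞. If there exists T > 0 such that for all t ≥ T, ln z(t) ≤ λ t - λ₀ ∫₀ᵗ z(s) ds + F(t), then z(t) → 0 as t → ∞. -/
open MeasureTheory Filter

theorem stmt_4 (lam0 lam : ℝ) (hlam0 : 0 < lam0) (hlam : lam < 0)
    (z : ℝ → ℝ) (hzpos : ∀ t : ℝ, 0 ≤ t → 0 < z t)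
    (hzcont : ContinuousOn z (Set.Ici 0))
    (F : ℝ → ℝ) (hF : Tendsto (fun t => F t / t) atTop (nhds 0))
    (T : ℝ) (hT : 0 < T)
    (hineq : ∀ t ≥ T, Real.log (z t) ≤ lam * t - lam0 * (∫ s in (0:ℝ)..t, z s) + F t) :
    Tendsto z atTop (nhds 0) := by
  -- Step 1: log z t ≤ lam * t + F t for t ≥ T
  have hlog : ∀ t ≥ T, Real.log (z t) ≤ lam * t + F t := by
    intro t ht
    have hInn : (0:ℝ) ≤ ∫ s in (0:ℝ)..t, z s := by
      apply intervalIntegral.integral_nonneg (le_trans hT.le ht)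
      intro u hu
      exact (hzpos u hu.1).le
    have := hineq t ht
    nlinarith
  -- Step 2: lam * t + F t → -∞
  have hbot : Tendsto (fun t => lam * t + F t) atTop atBot := by
    have hev : ∀ᶠ t in atTop, lam * t + F t ≤ (lam / 2) * t := by
      have h1 : ∀ᶠ t in atTop, F t / t ≤ -lam / 2 :=
        hF.eventually_le_const (show (0:ℝ) < -lam/2 by linarith)
      filter_upwards [h1, eventually_gt_atTop (0:ℝ)] with t h1 h2
      have : F t ≤ (-lam / 2) * t := by
        rw [div_le_iff₀ h2] at h1; linarith
      linarith
    exact tendsto_atBot_mono' atTop hev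
      ((tendsto_const_mul_atBot_of_neg (by linarith : lam/2 < 0)).mpr tendsto_id)
  -- Step 3: squeeze
  have hexp : Tendsto (fun t => Real.exp (lam * t + F t)) atTop (nhds 0) :=
    Real.tendsto_exp_atBot.comp hbot
  apply squeeze_zero' (g := fun t => Real.exp (lam * t + F t))
  · filter_upwards [eventually_ge_atTop T] with t ht
    exact (hzpos t (le_trans hT.le ht)).le
  · filter_upwards [eventually_ge_atTop T] with t ht
    have hz := hzpos t (le_trans hT.le ht)
    calc z t = Real.exp (Real.log (z t)) := (Real.exp_log hz).symm
      _ ≤ Real.exp (lam * t + F t) := Real.exp_le_exp.mpr (hlog t ht)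
  · exact hexp
end

section
/- Let λ₀ > 0, λ ≥ 0 be real constants, let z : [0,∞) → (0,∞) be continuous, and let F : [0,∞) → ℝ satisfy F(t)/t → 0 as t → ∞. If there exists T > 0 such that for all t ≥ T, ln z(t) ≤ λ t - λ₀ ∫₀ᵗ z(s) ds + F(t), then limsup_{t→∞} (1/t) ∫₀ᵗ z(s) ds ≤ λ/λ₀. -/
/-!
Write `J t = ∫₀ᵗ z`. Since `J' = z`, the hypothesis says that `(exp (λ₀ J))' = λ₀ z exp (λ₀ J)`
is at most `λ₀ exp ((λ + δ) t)` for large `t`, for any `δ > 0`. Integrating, `exp (λ₀ J t)` grows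
at most like `t exp ((λ + δ) t)`, so `λ₀ J t ≤ (λ + 2δ) t` eventually; divide by `λ₀ t` and
let `δ → 0`.
-/

open MeasureTheory Filter Set Real Asymptotics

theorem ContinuousOn.hasDerivAt_intervalIntegral_of_lt {z : ℝ → ℝ} {a t : ℝ}
    (hz : ContinuousOn z (Ici a)) (hat : a < t) :
    HasDerivAt (fun u => ∫ s in a..u, z s) (z t) t :=
  intervalIntegral.integral_hasDerivAt_right
    ((hz.mono (uIcc_of_le hat.le ▸ Icc_subset_Ici_self)).intervalIntegrable)
    ((hz.mono Ioi_subset_Ici_self).stronglyMeasurableAtFilter isOpen_Ioi t hat)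
    (hz.continuousAt (Ici_mem_nhds hat))

theorem exp_mul_sub_le_of_deriv_mul_exp_le {J w : ℝ → ℝ} {κ B a t : ℝ} (hκ : 0 ≤ κ)
    (hat : a ≤ t) (hJ : ∀ s ∈ Icc a t, HasDerivAt J (w s) s)
    (hB : ∀ s ∈ Icc a t, w s * exp (κ * J s) ≤ B) :
    exp (κ * J t) - exp (κ * J a) ≤ κ * B * (t - a) := by
  have hderiv : ∀ s ∈ Icc a t, HasDerivAt (fun u => exp (κ * J u)) (κ * (w s * exp (κ * J s))) s :=
    fun s hs => by
      convert ((hJ s hs).const_mul κ).exp using 1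
      ring
  refine (convex_Icc a t).image_sub_le_mul_sub_of_deriv_le
    (fun s hs => (hderiv s hs).continuousAt.continuousWithinAt)
    (fun s hs => (hderiv s (interior_subset hs)).differentiableAt.differentiableWithinAt)
    (fun s hs => ?_) a (left_mem_Icc.2 hat) t (right_mem_Icc.2 hat) hat
  rw [(hderiv s (interior_subset hs)).deriv]
  exact mul_le_mul_of_nonneg_left (hB s (interior_subset hs)) hκ

theorem eventually_add_mul_mul_exp_le_exp (C K : ℝ) {μ η : ℝ} (hμ : 0 ≤ μ) (hη : 0 < η) :
    ∀ᶠ t in atTop, C + K * t * exp (μ * t) ≤ exp ((μ + η) * t) := by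
  have hexp : Tendsto (fun t => exp ((μ + η) * t)) atTop atTop :=
    tendsto_exp_atTop.comp (tendsto_id.const_mul_atTop (by linarith))
  have hC : (fun _ => C) =o[atTop] fun t => exp ((μ + η) * t) :=
    isLittleO_const_left.2 <| Or.inr <| tendsto_norm_atTop_atTop.comp hexp
  have hK : (fun t => K * t * exp (μ * t)) =o[atTop] fun t => exp ((μ + η) * t) := by
    have := (((isLittleO_pow_exp_pos_mul_atTop 1 hη).const_mul_left K).mul_isBigO
      (isBigO_refl (fun t => exp (μ * t)) atTop))
    simpa only [pow_one, ← exp_add, ← add_mul, add_comm η] using this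
  filter_upwards [(hC.add hK).bound one_pos] with t ht
  simpa only [Real.norm_eq_abs, abs_exp, one_mul] using (le_abs_self _).trans ht

theorem eventually_mul_le_of_log_add_mul_le {J w : ℝ → ℝ} {κ μ η : ℝ} (hκ : 0 ≤ κ)
    (hμ : 0 ≤ μ) (hη : 0 < η) (hJ : ∀ᶠ s in atTop, HasDerivAt J (w s) s)
    (hw : ∀ᶠ s in atTop, 0 < w s) (hbound : ∀ᶠ s in atTop, log (w s) + κ * J s ≤ μ * s) :
    ∀ᶠ t in atTop, κ * J t ≤ (μ + η) * t := by
  obtain ⟨a, ha⟩ := (hJ.and (hw.and (hbound.and (eventually_ge_atTop 0)))).exists_forall_of_atTop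
  filter_upwards [eventually_add_mul_mul_exp_le_exp (exp (κ * J a)) κ hμ hη,
    eventually_ge_atTop a] with t hgrowth hat
  have hmvt := exp_mul_sub_le_of_deriv_mul_exp_le (B := exp (μ * t)) hκ hat
    (fun s hs => (ha s hs.1).1) fun s hs => by
      obtain ⟨-, hws, hlog, -⟩ := ha s hs.1
      calc w s * exp (κ * J s) = exp (log (w s) + κ * J s) := by rw [exp_add, exp_log hws]
        _ ≤ exp (μ * t) := exp_le_exp.2 (hlog.trans (mul_le_mul_of_nonneg_left hs.2 hμ))
  have ha0 : 0 ≤ a := (ha a le_rfl).2.2.2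
  have hdrop_a : κ * exp (μ * t) * (t - a) ≤ κ * t * exp (μ * t) := by
    nlinarith [mul_nonneg hκ (exp_pos (μ * t)).le]
  exact exp_le_exp.1 (by linarith)

theorem stmt_5_general (lam0 lam : ℝ) (hlam0 : 0 < lam0) (hlam : 0 ≤ lam)
    (z : ℝ → ℝ) (hzpos : ∀ t : ℝ, 0 ≤ t → 0 < z t)
    (hzcont : ContinuousOn z (Set.Ici 0))
    (F : ℝ → ℝ) (hF : Tendsto (fun t => F t / t) atTop (nhds 0))
    (T : ℝ)
    (hineq : ∀ t ≥ T, Real.log (z t) ≤ lam * t - lam0 * (∫ s in (0:ℝ)..t, z s) + F t) :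
    Filter.limsup (fun t => (1 / t) * ∫ s in (0:ℝ)..t, z s) atTop ≤ lam / lam0 := by
  set J : ℝ → ℝ := fun t => ∫ s in (0:ℝ)..t, z s
  have hgrowth : ∀ δ > 0, ∀ᶠ t in atTop, lam0 * J t ≤ (lam + δ + δ) * t := by
    intro δ hδ
    refine eventually_mul_le_of_log_add_mul_le hlam0.le (by positivity) hδ
      ((eventually_gt_atTop 0).mono fun t ht => hzcont.hasDerivAt_intervalIntegral_of_lt ht)
      ((eventually_ge_atTop 0).mono hzpos) ?_
    filter_upwards [eventually_ge_atTop T, hF.eventually (eventually_le_nhds hδ),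
      eventually_gt_atTop 0] with s hsT hFs hs
    linarith [hineq s hsT, (div_le_iff₀ hs).1 hFs]
  have hnonneg : ∀ᶠ t in atTop, 0 ≤ 1 / t * J t := by
    filter_upwards [eventually_gt_atTop 0] with t ht
    exact mul_nonneg (by positivity)
      (intervalIntegral.integral_nonneg ht.le fun s hs => (hzpos s hs.1).le)
  refine le_of_forall_pos_le_add fun ε hε =>
    limsup_le_of_le (isCoboundedUnder_le_of_eventually_le _ hnonneg) ?_
  filter_upwards [hgrowth (lam0 * ε / 2) (by positivity), eventually_gt_atTop 0] with t hJt ht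
  rw [one_div, inv_mul_le_iff₀ ht, ← mul_le_mul_iff_right₀ hlam0]
  field_simp
  linarith

theorem stmt_5 (lam0 lam : ℝ) (hlam0 : 0 < lam0) (hlam : 0 ≤ lam)
    (z : ℝ → ℝ) (hzpos : ∀ t : ℝ, 0 ≤ t → 0 < z t)
    (hzcont : ContinuousOn z (Set.Ici 0))
    (F : ℝ → ℝ) (hF : Tendsto (fun t => F t / t) atTop (nhds 0))
    (T : ℝ) (hT : 0 < T)
    (hineq : ∀ t ≥ T, Real.log (z t) ≤ lam * t - lam0 * (∫ s in (0:ℝ)..t, z s) + F t) :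
    Filter.limsup (fun t => (1 / t) * ∫ s in (0:ℝ)..t, z s) atTop ≤ lam / lam0 :=
  stmt_5_general lam0 lam hlam0 hlam z hzpos hzcont F hF T hineq
end

section
/- Let C be an invertible 2×2 real matrix such that M := C⁻¹ + (C⁻¹)ᵀ is positive definite, and let L ∈ ℝ². Define Y(H) = Hᵀ C⁻¹ (L - H) for H ∈ ℝ². Then A := (C (C⁻¹)ᵀ + I)⁻¹ L is well defined (i.e., C(C⁻¹)ᵀ + I is invertible), satisfies C⁻¹ L = M A, and is the unique global maximizer of Y over ℝ². -/
open Matrix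

theorem stmt_8 (C : Matrix (Fin 2) (Fin 2) ℝ) (hC : IsUnit C.det)
    (hM : (C⁻¹ + C⁻¹ᵀ).PosDef) (L : Fin 2 → ℝ)
    (Y : (Fin 2 → ℝ) → ℝ) (hY : ∀ H, Y H = H ⬝ᵥ (C⁻¹ *ᵥ (L - H)))
    (A : Fin 2 → ℝ) (hA : A = (C * C⁻¹ᵀ + 1)⁻¹ *ᵥ L) :
    IsUnit (C * C⁻¹ᵀ + 1).det ∧
    C⁻¹ *ᵥ L = (C⁻¹ + C⁻¹ᵀ) *ᵥ A ∧
    (∀ H : Fin 2 → ℝ, H ≠ A → Y H < Y A) := by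
  set N := C⁻¹ with hN
  set M := N + Nᵀ with hMdef
  have hMunit : IsUnit M.det := hM.det_pos.ne'.isUnit
  have hkey : C * Nᵀ + 1 = C * M := by
    rw [hMdef, Matrix.mul_add, Matrix.mul_nonsing_inv C hC, add_comm]
  have hdet : IsUnit (C * Nᵀ + 1).det := by
    rw [hkey, Matrix.det_mul]
    exact hC.mul hMunit
  have hA' : A = M⁻¹ *ᵥ (N *ᵥ L) := by
    rw [hA, hkey, Matrix.mul_inv_rev, ← Matrix.mulVec_mulVec]
  have hMA : N *ᵥ L = M *ᵥ A := by
    rw [hA', Matrix.mulVec_mulVec, Matrix.mul_nonsing_inv M hMunit, Matrix.one_mulVec]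
  refine ⟨hdet, hMA, ?_⟩
  -- symmetry of the bilinear form
  have hMsymm : Mᵀ = M := by rw [hMdef, Matrix.transpose_add, Matrix.transpose_transpose, add_comm]
  have hsymm : ∀ x y : Fin 2 → ℝ, x ⬝ᵥ (M *ᵥ y) = y ⬝ᵥ (M *ᵥ x) := by
    intro x y
    rw [Matrix.dotProduct_mulVec, ← Matrix.vecMul_transpose, hMsymm, dotProduct_comm]
  -- half identity
  have hhalf : ∀ x : Fin 2 → ℝ, x ⬝ᵥ (M *ᵥ x) = 2 * (x ⬝ᵥ (N *ᵥ x)) := by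
    intro x
    rw [hMdef, Matrix.add_mulVec, dotProduct_add]
    have : x ⬝ᵥ (Nᵀ *ᵥ x) = x ⬝ᵥ (N *ᵥ x) := by
      rw [Matrix.mulVec_transpose, dotProduct_comm, Matrix.dotProduct_mulVec]
    rw [this]; ring
  intro H hne
  have hpos : 0 < (A - H) ⬝ᵥ (M *ᵥ (A - H)) := by
    have := hM.re_dotProduct_pos (x := A - H) (sub_ne_zero.mpr (Ne.symm hne))
    simpa using this
  have hYH : ∀ x : Fin 2 → ℝ, Y x = x ⬝ᵥ (M *ᵥ A) - x ⬝ᵥ (N *ᵥ x) := by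
    intro x
    rw [hY, Matrix.mulVec_sub, dotProduct_sub, hMA]
  have hexp : (A - H) ⬝ᵥ (M *ᵥ (A - H)) = 2 * (Y A - Y H) := by
    rw [hYH A, hYH H]
    rw [Matrix.mulVec_sub, dotProduct_sub, sub_dotProduct,
      sub_dotProduct, hsymm H A]
    have h1 := hhalf A
    have h2 := hhalf H
    rw [hMdef] at *
    nlinarith [hsymm H A]
  nlinarith
end

section
/- Let C be an invertible 2×2 real matrix with C⁻¹ + (C⁻¹)ᵀ positive definite, L ∈ ℝ², and A = (C(C⁻¹)ᵀ + I)⁻¹ L. Then for all H ∈ ℝ², Hᵀ C⁻¹ (L - H) ≤ Aᵀ C⁻¹ (L - A), with equality if and only if H = A. -/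
open Matrix

theorem stmt_9 (C : Matrix (Fin 2) (Fin 2) ℝ) (hC : IsUnit C.det)
    (hM : (C⁻¹ + C⁻¹ᵀ).PosDef) (L : Fin 2 → ℝ)
    (A : Fin 2 → ℝ) (hA : A = (C * C⁻¹ᵀ + 1)⁻¹ *ᵥ L) :
    ∀ H : Fin 2 → ℝ,
      H ⬝ᵥ (C⁻¹ *ᵥ (L - H)) ≤ A ⬝ᵥ (C⁻¹ *ᵥ (L - A)) ∧
      (H ⬝ᵥ (C⁻¹ *ᵥ (L - H)) = A ⬝ᵥ (C⁻¹ *ᵥ (L - A)) ↔ H = A) := by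
  intro H
  set M : Matrix (Fin 2) (Fin 2) ℝ := C⁻¹ + C⁻¹ᵀ with hMdef
  have hCinv' : C * C⁻¹ = 1 := mul_nonsing_inv C hC
  have hMfac : C * M = C * C⁻¹ᵀ + 1 := by
    rw [hMdef, Matrix.mul_add, hCinv', add_comm]
  have hMunit : IsUnit M.det := isUnit_iff_ne_zero.mpr (ne_of_gt hM.det_pos)
  have hCMunit : IsUnit (C * M).det := by
    rw [det_mul]; exact hC.mul hMunit
  have hMA : M *ᵥ A = C⁻¹ *ᵥ L := by
    rw [hA, ← hMfac, Matrix.mul_inv_rev, mulVec_mulVec, ← Matrix.mul_assoc,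
      mul_nonsing_inv M hMunit, Matrix.one_mul]
  have htr : ∀ x y : Fin 2 → ℝ, x ⬝ᵥ (C⁻¹ᵀ *ᵥ y) = y ⬝ᵥ (C⁻¹ *ᵥ x) := by
    intro x y
    rw [dotProduct_mulVec, vecMul_transpose, dotProduct_comm]
  have hL : C⁻¹ *ᵥ L = C⁻¹ *ᵥ A + C⁻¹ᵀ *ᵥ A := by
    rw [← hMA, hMdef, add_mulVec]
  have key : A ⬝ᵥ (C⁻¹ *ᵥ (L - A)) - H ⬝ᵥ (C⁻¹ *ᵥ (L - H)) =
      (H - A) ⬝ᵥ (C⁻¹ *ᵥ (H - A)) := by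
    simp only [mulVec_sub, dotProduct_sub, sub_dotProduct, hL, dotProduct_add,
      htr]
    ring
  have hpos : ∀ x : Fin 2 → ℝ, x ≠ 0 → 0 < x ⬝ᵥ (C⁻¹ *ᵥ x) := by
    intro x hx
    have h := hM.re_dotProduct_pos hx
    simp only [RCLike.re_to_real, star_trivial] at h
    rw [hMdef, add_mulVec, dotProduct_add, htr] at h
    linarith
  by_cases hHA : H = A
  · subst hHA
    simp
  · have hD : H - A ≠ 0 := sub_ne_zero.mpr hHA
    have h0 := hpos _ hD
    constructor
    · linarith
    · constructor
      · intro h; exfalso; linarith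
      · intro h; exact absurd h hHA
end
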